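/- Fix n ≥ 2, ε > 0, and nonnegative B_0, R_0, G_0 with B_0 > 0 and B_0 + R_0 + G_0 = 1, and define τ_B, τ_R, (B*_i), and (R*_i) as in the context. Let (B_i, R_i, G_i)_{i=0}^{n−1} be a feasible sequence with B_i = B*_i for all i. Then R_i ≤ R*_i for all 0 ≤ i ≤ n−1. -/
import Mathlib


/-- The ε-DP feasibility constraints on the `n`-vertex path graph (vertices `0,…,n−1`,
all carrying the rainbow (blue, red, green)), with starting values `(B0, R0, G0)`:
all entries nonnegative and summing to `1`, and all ε-DP constraints between
consecutive vertices for all three colors. -/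
def Feasible (n : ℕ) (ε B0 R0 G0 : ℝ) (B R G : ℕ → ℝ) : Prop :=
  B 0 = B0 ∧ R 0 = R0 ∧ G 0 = G0 ∧
  (∀ i ≤ n - 1, 0 ≤ B i ∧ 0 ≤ R i ∧ 0 ≤ G i ∧ B i + R i + G i = 1) ∧
  (∀ i, i + 1 ≤ n - 1 →
    B i ≤ Real.exp ε * B (i + 1) ∧ B (i + 1) ≤ Real.exp ε * B i ∧
    R i ≤ Real.exp ε * R (i + 1) ∧ R (i + 1) ≤ Real.exp ε * R i ∧
    G i ≤ Real.exp ε * G (i + 1) ∧ G (i + 1) ≤ Real.exp ε * G i)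

/-- The index threshold `τ_B = ⌊max(0, 1 − ln(B₀·(e^ε+1))/ε)⌋`. -/
noncomputable def tauB (ε B0 : ℝ) : ℕ :=
  ⌊max 0 (1 - Real.log (B0 * (Real.exp ε + 1)) / ε)⌋₊

/-- The index threshold `τ_R = ⌊max(0, 1 − ln((B₀+R₀)·(e^ε+1))/ε)⌋`. -/
noncomputable def tauR (ε B0 R0 : ℝ) : ℕ :=
  ⌊max 0 (1 - Real.log ((B0 + R0) * (Real.exp ε + 1)) / ε)⌋₊

/-- The optimal blue probabilities: `B*_i = e^{iε}·B₀` for `i ≤ τ_B` and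
`B*_i = 1 − e^{(τ_B−i)ε} + e^{(2τ_B−i)ε}·B₀` for `i > τ_B`. -/
noncomputable def Bstar (ε B0 : ℝ) (i : ℕ) : ℝ :=
  if i ≤ tauB ε B0 then Real.exp (i * ε) * B0
  else 1 - Real.exp (((tauB ε B0 : ℝ) - i) * ε)
       + Real.exp ((2 * (tauB ε B0 : ℝ) - i) * ε) * B0

/-- `R_Mid(i) = 1 − e^{−(i−τ_R)ε} − e^{iε}·B₀ + e^{−(i−2τ_R)ε}·(B₀+R₀)`. -/
noncomputable def RMid (ε B0 R0 : ℝ) (i : ℕ) : ℝ :=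
  1 - Real.exp (-(((i : ℝ) - (tauR ε B0 R0 : ℝ)) * ε))
    - Real.exp (i * ε) * B0
    + Real.exp (-(((i : ℝ) - 2 * (tauR ε B0 R0 : ℝ)) * ε)) * (B0 + R0)

/-- The optimal red probabilities: `R*_i = e^{iε}·R₀` for `i ≤ τ_R`,
`R*_i = R_Mid(i)` for `τ_R < i ≤ τ_B`, and
`R*_i = e^{−(i−τ_B)ε}·R_Mid(τ_B)` for `i > τ_B`. -/
noncomputable def Rstar (ε B0 R0 : ℝ) (i : ℕ) : ℝ :=
  if i ≤ tauR ε B0 R0 then Real.exp (i * ε) * R0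
  else if i ≤ tauB ε B0 then RMid ε B0 R0 i
  else Real.exp (-(((i : ℝ) - (tauB ε B0 : ℝ)) * ε)) * RMid ε B0 R0 (tauB ε B0)

/-- The optimal green probabilities `G*_i = 1 − B*_i − R*_i`. -/
noncomputable def Gstar (ε B0 R0 : ℝ) (i : ℕ) : ℝ :=
  1 - Bstar ε B0 i - Rstar ε B0 R0 i

lemma tauR_le_tauB (ε : ℝ) (hε : 0 < ε) (B0 R0 : ℝ) (hB0 : 0 < B0) (hR0 : 0 ≤ R0) :
    tauR ε B0 R0 ≤ tauB ε B0 := by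
  apply Nat.floor_le_floor
  apply max_le_max le_rfl
  apply sub_le_sub_left
  apply div_le_div_of_nonneg_right ?_ hε.le
  apply Real.log_le_log (by positivity)
  have := Real.add_one_le_exp ε
  nlinarith

lemma RMid_tauR (ε B0 R0 : ℝ) :
    RMid ε B0 R0 (tauR ε B0 R0) = Real.exp ((tauR ε B0 R0 : ℝ) * ε) * R0 := by
  unfold RMid
  rw [show -(((tauR ε B0 R0 : ℝ) - (tauR ε B0 R0 : ℝ)) * ε) = 0 by ring,
      show -(((tauR ε B0 R0 : ℝ) - 2 * (tauR ε B0 R0 : ℝ)) * ε) = (tauR ε B0 R0 : ℝ) * ε by ring,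
      Real.exp_zero]
  ring

lemma Rstar_mid (ε B0 R0 : ℝ) {i : ℕ} (h1 : tauR ε B0 R0 ≤ i) (h2 : i ≤ tauB ε B0) :
    Rstar ε B0 R0 i = RMid ε B0 R0 i := by
  rcases eq_or_lt_of_le h1 with h | h
  · rw [Rstar, if_pos (le_of_eq h.symm), ← h, RMid_tauR]
  · rw [Rstar, if_neg (by omega), if_pos h2]

lemma Rstar_late (ε B0 R0 : ℝ) (hε : 0 < ε) (hB0 : 0 < B0) (hR0 : 0 ≤ R0)
    {i : ℕ} (h : tauB ε B0 ≤ i) :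
    Rstar ε B0 R0 i = Real.exp (-(((i : ℝ) - (tauB ε B0 : ℝ)) * ε)) * RMid ε B0 R0 (tauB ε B0) := by
  have hτ := tauR_le_tauB ε hε B0 R0 hB0 hR0
  rcases eq_or_lt_of_le h with h | h
  · rw [← h, Rstar_mid ε B0 R0 hτ le_rfl,
      show -(((tauB ε B0 : ℝ) - (tauB ε B0 : ℝ)) * ε) = 0 by ring, Real.exp_zero, one_mul]
  · rw [Rstar, if_neg (by omega), if_neg (by omega)]

lemma Bstar_late (ε B0 : ℝ) {i : ℕ} (h : tauB ε B0 ≤ i) :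
    Bstar ε B0 i = 1 - Real.exp (((tauB ε B0 : ℝ) - i) * ε)
       + Real.exp ((2 * (tauB ε B0 : ℝ) - i) * ε) * B0 := by
  rcases eq_or_lt_of_le h with h | h
  · rw [← h, Bstar, if_pos le_rfl,
      show ((tauB ε B0 : ℝ) - (tauB ε B0 : ℝ)) * ε = 0 by ring,
      show (2 * (tauB ε B0 : ℝ) - (tauB ε B0 : ℝ)) * ε = (tauB ε B0 : ℝ) * ε by ring,
      Real.exp_zero]
    ring
  · rw [Bstar, if_neg (by omega)]

lemma midstep (ε B0 R0 : ℝ) (i : ℕ) :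
    1 - Real.exp (((i : ℝ) + 1) * ε) * B0
      - Real.exp (-ε) * (1 - Real.exp ((i : ℝ) * ε) * B0 - RMid ε B0 R0 i)
      = RMid ε B0 R0 (i + 1) := by
  unfold RMid
  push_cast
  rw [show ((i:ℝ)+1)*ε = (i:ℝ)*ε + ε by ring,
      show -((((i:ℝ)+1) - (tauR ε B0 R0 : ℝ))*ε) = -(((i:ℝ) - (tauR ε B0 R0 : ℝ))*ε) + (-ε) by ring,
      show -((((i:ℝ)+1) - 2*(tauR ε B0 R0 : ℝ))*ε) = -(((i:ℝ) - 2*(tauR ε B0 R0 : ℝ))*ε) + (-ε) by ring,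
      Real.exp_add, Real.exp_add, Real.exp_add]
  ring

lemma latestep (ε B0 r t x : ℝ) :
    1 - (1 - Real.exp ((t - (x+1))*ε) + Real.exp ((2*t - (x+1))*ε)*B0)
      - Real.exp (-ε) * (1 - (1 - Real.exp ((t-x)*ε) + Real.exp ((2*t-x)*ε)*B0) - r)
      = Real.exp (-ε) * r := by
  rw [show (t - (x+1))*ε = (t-x)*ε + (-ε) by ring,
      show (2*t-(x+1))*ε = (2*t-x)*ε + (-ε) by ring,
      Real.exp_add, Real.exp_add]
  ring

/-- Along a feasible sequence whose blue coordinate equals `B*`, the red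
coordinate satisfies `R_i ≤ R*_i` for all `0 ≤ i ≤ n−1`. -/
theorem feasible_red_le_Rstar (n : ℕ) (hn : 2 ≤ n) (ε : ℝ) (hε : 0 < ε)
    (B0 R0 G0 : ℝ) (hB0 : 0 < B0) (hR0 : 0 ≤ R0) (hG0 : 0 ≤ G0)
    (hsum : B0 + R0 + G0 = 1)
    (B R G : ℕ → ℝ) (hfeas : Feasible n ε B0 R0 G0 B R G)
    (hB : ∀ i ≤ n - 1, B i = Bstar ε B0 i) :
    ∀ i ≤ n - 1, R i ≤ Rstar ε B0 R0 i := by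
  obtain ⟨hB0e, hR0e, hG0e, hnn, hdp⟩ := hfeas
  have hτ := tauR_le_tauB ε hε B0 R0 hB0 hR0
  intro i
  induction i with
  | zero =>
    intro _
    rw [hR0e, Rstar, if_pos (Nat.zero_le _)]
    simp
  | succ i ih =>
    intro hi1
    have hi : i ≤ n - 1 := le_trans (Nat.le_succ i) hi1
    have ihR := ih hi
    obtain ⟨_, _, hRc1, hRc2, hGc1, hGc2⟩ := hdp i hi1
    by_cases hA : i + 1 ≤ tauR ε B0 R0
    · -- early region: R(i+1) ≤ e^ε R i ≤ e^ε R* i = R*(i+1)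
      have hiA : i ≤ tauR ε B0 R0 := by omega
      rw [Rstar, if_pos hA]
      calc R (i + 1) ≤ Real.exp ε * R i := hRc2
        _ ≤ Real.exp ε * Rstar ε B0 R0 i :=
            mul_le_mul_of_nonneg_left ihR (Real.exp_pos ε).le
        _ = Real.exp ((↑(i + 1) : ℝ) * ε) * R0 := by
            rw [Rstar, if_pos hiA, ← mul_assoc, ← Real.exp_add]
            push_cast
            ring_nf
    · -- the key step inequality
      have hsum0 := (hnn i hi).2.2.2
      have hsum1 := (hnn (i + 1) hi1).2.2.2
      have hkey : R (i + 1) ≤ 1 - B (i + 1) - Real.exp (-ε) * (1 - B i - R i) := by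
        have hG : Real.exp (-ε) * G i ≤ G (i + 1) := by
          have h1 : Real.exp (-ε) * G i ≤ Real.exp (-ε) * (Real.exp ε * G (i + 1)) :=
            mul_le_mul_of_nonneg_left hGc1 (Real.exp_pos (-ε)).le
          have h2 : Real.exp (-ε) * (Real.exp ε * G (i + 1)) = G (i + 1) := by
            rw [← mul_assoc, ← Real.exp_add]
            simp
          linarith
        have e1 : Real.exp (-ε) * (1 - B i - R i) = Real.exp (-ε) * G i := by
          rw [show (1 : ℝ) - B i - R i = G i by linarith]
        linarith
      have hRiτ : tauR ε B0 R0 ≤ i := by omega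
      by_cases hBc : i + 1 ≤ tauB ε B0
      · -- middle region
        have hiB : i ≤ tauB ε B0 := by omega
        have hBi : B i = Real.exp ((i : ℝ) * ε) * B0 := by
          rw [hB i hi, Bstar, if_pos hiB]
        have hBi1 : B (i + 1) = Real.exp (((i : ℝ) + 1) * ε) * B0 := by
          rw [hB (i + 1) hi1, Bstar, if_pos hBc]
          push_cast
          ring_nf
        have hRs : Rstar ε B0 R0 i = RMid ε B0 R0 i := Rstar_mid ε B0 R0 hRiτ hiB
        have hRs1 : Rstar ε B0 R0 (i + 1) = RMid ε B0 R0 (i + 1) :=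
          Rstar_mid ε B0 R0 (by omega) hBc
        have hmono : Real.exp (-ε) * R i ≤ Real.exp (-ε) * RMid ε B0 R0 i := by
          rw [← hRs]
          exact mul_le_mul_of_nonneg_left ihR (Real.exp_pos (-ε)).le
        have := midstep ε B0 R0 i
        rw [hRs1, ← this]
        rw [hBi, hBi1] at hkey
        nlinarith [hkey, hmono]
      · -- late region
        have hiB : tauB ε B0 ≤ i := by omega
        have hBi : B i = 1 - Real.exp (((tauB ε B0 : ℝ) - i) * ε)
            + Real.exp ((2 * (tauB ε B0 : ℝ) - i) * ε) * B0 := by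
          rw [hB i hi, Bstar_late ε B0 hiB]
        have hBi1 : B (i + 1) = 1 - Real.exp (((tauB ε B0 : ℝ) - ((i : ℝ) + 1)) * ε)
            + Real.exp ((2 * (tauB ε B0 : ℝ) - ((i : ℝ) + 1)) * ε) * B0 := by
          rw [hB (i + 1) hi1, Bstar_late ε B0 (by omega)]
          push_cast
          ring_nf
        have hid := latestep ε B0 (R i) (tauB ε B0 : ℝ) (i : ℝ)
        rw [hBi, hBi1] at hkey
        have hk2 : R (i + 1) ≤ Real.exp (-ε) * R i := by
          rw [← hid]; exact hkey
        have hRs : Rstar ε B0 R0 i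
            = Real.exp (-(((i : ℝ) - (tauB ε B0 : ℝ)) * ε)) * RMid ε B0 R0 (tauB ε B0) :=
          Rstar_late ε B0 R0 hε hB0 hR0 hiB
        have hRs1 : Rstar ε B0 R0 (i + 1)
            = Real.exp (-(((↑(i + 1) : ℝ) - (tauB ε B0 : ℝ)) * ε)) * RMid ε B0 R0 (tauB ε B0) :=
          Rstar_late ε B0 R0 hε hB0 hR0 (by omega)
        have hmono : Real.exp (-ε) * R i ≤ Real.exp (-ε) * Rstar ε B0 R0 i :=
          mul_le_mul_of_nonneg_left ihR (Real.exp_pos (-ε)).le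
        have hfin : Real.exp (-ε) * Rstar ε B0 R0 i = Rstar ε B0 R0 (i + 1) := by
          rw [hRs, hRs1, ← mul_assoc, ← Real.exp_add]
          push_cast
          ring_nf
        linarith
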